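/- Let N ≥ 1, let ħ ≠ 0 and ν ≥ 0 be real, and let W, P : ℝ → M_N(ℂ) with W differentiable, W(t) and P(t) skew-Hermitian for every t, and dW/dt = −(1/ħ)·[W(t), P(t)] + (ν/ħ²)·[P(t), [P(t), W(t)]] (the hyperviscous Euler–Zeitlin equations). Let f : ℝ → ℝ be convex and continuously differentiable. Then the Casimir t ↦ tr(f(i·W(t))) (a real number, where f is applied to the Hermitian matrix i·W(t) via the continuous functional calculus) is non-increasing in t. -/

import Mathlib

/-!
Write `A = i W`, a Hermitian matrix with `Ȧ = -(1/ħ)[A,P] + (ν/ħ²)[P,[P,A]]`. Klein's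
inequality `tr f(X) - tr f(Y) ≥ Re tr (f'(Y)(X - Y))`, applied with `(X, Y) = (A s, A t)` and
`(A t, A s)`, traps the difference quotient of `t ↦ tr f(A t)` between two quotients that both
converge to `Re tr (f'(A t) Ȧ t)`, by continuity of the functional calculus. In this derivative
the Euler part vanishes because `f'(A)` commutes with `A`, while in an eigenbasis of `A` the
hyperviscous part equals `-(ν/ħ²) Σ_{j,k} (f'(λ_j) - f'(λ_k))(λ_j - λ_k) |P_jk|²`, which is
nonpositive because `f'` is monotone.
-/

open Matrix Filter Topology Set

theorem tendsto_of_tendsto_of_tendsto_of_mem_uIcc {α : Type*} {l : Filter α} {a b c : α → ℝ}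
    {x : ℝ} (ha : Tendsto a l (𝓝 x)) (hb : Tendsto b l (𝓝 x))
    (hc : ∀ᶠ s in l, c s ∈ uIcc (a s) (b s)) : Tendsto c l (𝓝 x) := by
  have hmin : Tendsto (fun s => min (a s) (b s)) l (𝓝 x) := by simpa using ha.min hb
  have hmax : Tendsto (fun s => max (a s) (b s)) l (𝓝 x) := by simpa using ha.max hb
  exact tendsto_of_tendsto_of_tendsto_of_le_of_le' hmin hmax (hc.mono fun s hs => hs.1)
    (hc.mono fun s hs => hs.2)

theorem ConvexOn.add_deriv_mul_sub_le {f : ℝ → ℝ} (hf : ConvexOn ℝ univ f) {x : ℝ}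
    (hx : DifferentiableAt ℝ f x) (y : ℝ) : f x + deriv f x * (y - x) ≤ f y := by
  rcases lt_trichotomy x y with hxy | rfl | hyx
  · have := hf.deriv_le_slope (mem_univ x) (mem_univ y) hxy hx
    rw [slope_def_field, le_div_iff₀ (sub_pos.2 hxy)] at this
    linarith
  · simp
  · have := hf.slope_le_deriv (mem_univ y) (mem_univ x) hyx hx
    rw [slope_def_field, div_le_iff₀ (sub_pos.2 hyx)] at this
    linarith

namespace Matrix

variable {n : Type*}

theorem isHermitian_I_smul {W : Matrix n n ℂ} (hW : Wᴴ = -W) :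
    (Complex.I • W).IsHermitian := by
  rw [IsHermitian, conjTranspose_smul, hW, Complex.star_def, Complex.conj_I, neg_smul_neg]

variable [Fintype n]

theorem trace_mul_commutator_eq_zero {R : Type*} [CommRing R] {C M : Matrix n n R}
    (hCM : Commute C M) (P : Matrix n n R) : trace (C * (M * P - P * M)) = 0 := by
  rw [Matrix.mul_sub, trace_sub, ← Matrix.mul_assoc, hCM.eq, Matrix.mul_assoc, trace_mul_comm M,
    Matrix.mul_assoc, sub_self]

theorem IsHermitian.im_trace {A : Matrix n n ℂ} (hA : A.IsHermitian) : A.trace.im = 0 := by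
  rw [← Complex.conj_eq_iff_im, ← Complex.star_def, ← trace_conjTranspose, hA.eq]

variable [DecidableEq n]

theorem trace_conjStarAlgAut (u : unitary (Matrix n n ℂ)) (X : Matrix n n ℂ) :
    trace (Unitary.conjStarAlgAut ℂ _ u X) = trace X := by
  rw [Unitary.conjStarAlgAut_apply, trace_mul_cycle, Unitary.coe_star_mul_self, Matrix.one_mul]

theorem continuous_cfc_of_isHermitian {X : Type*} [TopologicalSpace X]
    {A : X → Matrix n n ℂ} (hA : Continuous A) (hH : ∀ x, (A x).IsHermitian)
    {f : ℝ → ℝ} (hf : Continuous f) : Continuous fun x => cfc f (A x) := by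
  open scoped Matrix.Norms.L2Operator in
  exact Continuous.cfc_of_mem_nhdsSet (s := univ) f univ_mem hA
    (fun x => (hH x).isSelfAdjoint) hf.continuousOn

theorem IsHermitian.trace_cfc_mul_cfc {A B : Matrix n n ℂ} (hA : A.IsHermitian)
    (hB : B.IsHermitian) (g h : ℝ → ℝ) :
    trace (cfc g B * cfc h A) = ((∑ j, ∑ k, g (hB.eigenvalues j) * h (hA.eigenvalues k) *
      Complex.normSq ((star (hB.eigenvectorUnitary : Matrix n n ℂ) *
        hA.eigenvectorUnitary) j k) : ℝ) : ℂ) := by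
  set U : Matrix n n ℂ := (hB.eigenvectorUnitary : Matrix n n ℂ)
  set V : Matrix n n ℂ := (hA.eigenvectorUnitary : Matrix n n ℂ)
  rw [hA.cfc_eq, hB.cfc_eq, IsHermitian.cfc, IsHermitian.cfc, Unitary.conjStarAlgAut_apply,
    Unitary.conjStarAlgAut_apply, Matrix.mul_assoc, Matrix.mul_assoc, trace_mul_comm]
  have hS : diagonal (RCLike.ofReal ∘ g ∘ hB.eigenvalues) *
      (star U * (V * diagonal (RCLike.ofReal ∘ h ∘ hA.eigenvalues) * star V)) * U =
      diagonal (RCLike.ofReal ∘ g ∘ hB.eigenvalues) * (star U * V) *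
        diagonal (RCLike.ofReal ∘ h ∘ hA.eigenvalues) * star (star U * V) := by
    simp only [star_mul, star_star, Matrix.mul_assoc]
  rw [hS]
  generalize star U * V = S
  push_cast
  refine Finset.sum_congr rfl fun j _ => ?_
  rw [diag_apply, mul_apply]
  refine Finset.sum_congr rfl fun k _ => ?_
  rw [mul_diagonal, diagonal_mul, star_apply, Complex.star_def, Complex.normSq_eq_conj_mul_self]
  simp only [Function.comp_apply, RCLike.ofReal_eq_complex_ofReal]
  ring

theorem IsHermitian.klein_inequality {A B : Matrix n n ℂ} (hA : A.IsHermitian)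
    (hB : B.IsHermitian) {f f' : ℝ → ℝ} (hf : ∀ x y, f x + f' x * (y - x) ≤ f y) :
    (trace (cfc f' B * (A - B))).re ≤ (trace (cfc f A)).re - (trace (cfc f B)).re := by
  -- All four traces become double sums against the same weights `|(U_Bᴴ U_A)_jk|² ≥ 0`, so the
  -- inequality is the scalar tangent inequality summed termwise.
  have hA_eq : cfc f A = cfc (1 : ℝ → ℝ) B * cfc f A := by rw [cfc_one ℝ B, Matrix.one_mul]
  have hB_eq : cfc f B = cfc f B * cfc (1 : ℝ → ℝ) A := by rw [cfc_one ℝ A, Matrix.mul_one]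
  have hdiff : cfc f' B * (A - B) =
      cfc f' B * cfc (fun x : ℝ => x) A -
        cfc (fun x => f' x * x) B * cfc (1 : ℝ → ℝ) A := by
    rw [cfc_one ℝ A, Matrix.mul_one,
      cfc_mul f' (fun x => x) B (B.finite_real_spectrum.continuousOn f'), cfc_id' ℝ A,
      cfc_id' ℝ B, Matrix.mul_sub]
  rw [hA_eq, hB_eq, hdiff, trace_sub]
  simp only [hA.trace_cfc_mul_cfc hB, Complex.sub_re, Complex.ofReal_re,
    ← Finset.sum_sub_distrib]
  refine Finset.sum_le_sum fun j _ => Finset.sum_le_sum fun k _ => ?_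
  have := hf (hB.eigenvalues j) (hA.eigenvalues k)
  have := Complex.normSq_nonneg
    ((star (hB.eigenvectorUnitary : Matrix n n ℂ) * hA.eigenvectorUnitary) j k)
  simp only [Pi.one_apply]
  nlinarith

theorem hasDerivAt_re_trace_cfc {A : ℝ → Matrix n n ℂ} {A' : Matrix n n ℂ} {t : ℝ}
    (hH : ∀ s, (A s).IsHermitian) (hcont : Continuous A)
    (hA : ∀ i j, HasDerivAt (fun s => A s i j) (A' i j) t)
    {f : ℝ → ℝ} (hf : ConvexOn ℝ univ f) (hf1 : ContDiff ℝ 1 f) :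
    HasDerivAt (fun s => (trace (cfc f (A s))).re) (trace (cfc (deriv f) (A t) * A')).re t := by
  set D := fun s => cfc (deriv f) (A s)
  have htangent : ∀ x y, f x + deriv f x * (y - x) ≤ f y := fun x y =>
    hf.add_deriv_mul_sub_le (hf1.differentiable one_ne_zero x) y
  have hD : Tendsto D (𝓝[≠] t) (𝓝 (D t)) :=
    (continuous_cfc_of_isHermitian hcont hH (hf1.continuous_deriv le_rfl)).tendsto t
      |>.mono_left nhdsWithin_le_nhds
  have hslope : Tendsto (fun s => (s - t)⁻¹ • (A s - A t)) (𝓝[≠] t) (𝓝 A') :=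
    tendsto_pi_nhds.2 fun i => tendsto_pi_nhds.2 fun j =>
      (hasDerivAt_iff_tendsto_slope.1 (hA i j)).congr fun s => by rw [slope_def_module]; rfl
  have hpair : Continuous fun p : Matrix n n ℂ × Matrix n n ℂ => (trace (p.1 * p.2)).re :=
    Complex.continuous_re.comp (continuous_fst.mul continuous_snd).matrix_trace
  have hlow := hpair.continuousAt.tendsto.comp ((tendsto_const_nhds (x := D t)).prodMk_nhds hslope)
  have hup := hpair.continuousAt.tendsto.comp (hD.prodMk_nhds hslope)
  rw [hasDerivAt_iff_tendsto_slope]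
  refine tendsto_of_tendsto_of_tendsto_of_mem_uIcc hlow hup (Eventually.of_forall fun s => ?_)
  have hsmul : ∀ (X Y : Matrix n n ℂ) (c : ℝ),
      (trace (X * (c • Y))).re = c * (trace (X * Y)).re := fun X Y c => by
    rw [Matrix.mul_smul, trace_smul, Complex.smul_re, smul_eq_mul]
  have hle := (hH s).klein_inequality (hH t) htangent
  have hge := (hH t).klein_inequality (hH s) htangent
  rw [← neg_sub (A s), Matrix.mul_neg, trace_neg, Complex.neg_re] at hge
  simp only [Function.comp_apply, hsmul, slope_def_module, smul_eq_mul,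
    ← image_const_mul_uIcc]
  exact mem_image_of_mem _ (Icc_subset_uIcc ⟨hle, by linarith⟩)

theorem re_trace_diagonal_mul_double_commutator_nonpos {e d : n → ℝ} (hed : Monovary e d)
    {P : Matrix n n ℂ} (hP : Pᴴ = -P) :
    (trace (diagonal (RCLike.ofReal ∘ e) *
      (P * (P * diagonal (RCLike.ofReal ∘ d) - diagonal (RCLike.ofReal ∘ d) * P) -
        (P * diagonal (RCLike.ofReal ∘ d) - diagonal (RCLike.ofReal ∘ d) * P) * P))).re
      ≤ 0 := by
  set q : n → n → ℝ := fun j k => Complex.normSq (P j k)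
  have hPkj : ∀ j k, P k j = -star (P j k) := fun j k => by
    rw [← conjTranspose_apply, hP, neg_apply, neg_neg]
  have hq : ∀ j k, q k j = q j k := fun j k => by
    simp only [q, hPkj j k, Complex.normSq_neg, Complex.star_def, Complex.normSq_conj]
  have htrace : trace (diagonal (RCLike.ofReal ∘ e) *
      (P * (P * diagonal (RCLike.ofReal ∘ d) - diagonal (RCLike.ofReal ∘ d) * P) -
        (P * diagonal (RCLike.ofReal ∘ d) - diagonal (RCLike.ofReal ∘ d) * P) * P)) =
      ((-2 * ∑ j, ∑ k, e j * (d j - d k) * q j k : ℝ) : ℂ) := by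
    push_cast
    rw [Finset.mul_sum]
    refine Finset.sum_congr rfl fun j _ => ?_
    rw [diag_apply, diagonal_mul, sub_apply, mul_apply, mul_apply, ← Finset.sum_sub_distrib,
      Finset.mul_sum, Finset.mul_sum]
    refine Finset.sum_congr rfl fun k _ => ?_
    simp only [sub_apply, mul_diagonal, diagonal_mul, hPkj j k, q,
      Complex.normSq_eq_conj_mul_self, Function.comp_apply, RCLike.ofReal_eq_complex_ofReal,
      Complex.star_def]
    ring
  have hsymm : 2 * ∑ j, ∑ k, e j * (d j - d k) * q j k =
      ∑ j, ∑ k, (e j - e k) * (d j - d k) * q j k := by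
    rw [two_mul]
    nth_rw 2 [Finset.sum_comm]
    simp only [← Finset.sum_add_distrib, hq]
    exact Finset.sum_congr rfl fun j _ => Finset.sum_congr rfl fun k _ => by ring
  have hnonneg : 0 ≤ ∑ j, ∑ k, (e j - e k) * (d j - d k) * q j k :=
    Finset.sum_nonneg fun j _ => Finset.sum_nonneg fun k _ =>
      mul_nonneg (hed.sub_mul_sub_nonneg k j) (Complex.normSq_nonneg _)
  rw [htrace, Complex.ofReal_re]
  linarith

theorem IsHermitian.re_trace_cfc_mul_double_commutator_nonpos {M P : Matrix n n ℂ}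
    (hM : M.IsHermitian) (hP : Pᴴ = -P) {g : ℝ → ℝ} (hg : Monotone g) :
    (trace (cfc g M * (P * (P * M - M * P) - (P * M - M * P) * P))).re ≤ 0 := by
  set ψ := Unitary.conjStarAlgAut ℂ _ hM.eigenvectorUnitary
  set P' := ψ.symm P
  have hP' : P'ᴴ = -P' := by
    rw [← star_eq_conjTranspose, ← map_star, star_eq_conjTranspose, hP, map_neg]
  have hconj : cfc g M * (P * (P * M - M * P) - (P * M - M * P) * P) =
      ψ (diagonal (RCLike.ofReal ∘ g ∘ hM.eigenvalues) *
        (P' * (P' * diagonal (RCLike.ofReal ∘ hM.eigenvalues) -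
          diagonal (RCLike.ofReal ∘ hM.eigenvalues) * P') -
        (P' * diagonal (RCLike.ofReal ∘ hM.eigenvalues) -
          diagonal (RCLike.ofReal ∘ hM.eigenvalues) * P') * P')) := by
    simp only [map_mul, map_sub, P', StarAlgEquiv.apply_symm_apply, ψ, ← hM.spectral_theorem,
      hM.cfc_eq, IsHermitian.cfc]
  rw [hconj, trace_conjStarAlgAut]
  exact re_trace_diagonal_mul_double_commutator_nonpos
    ((monovary_self hM.eigenvalues).comp_monotone_left hg) hP'

theorem IsHermitian.re_trace_cfc_mul_hyperviscous_nonpos {M P : Matrix n n ℂ}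
    (hM : M.IsHermitian) (hP : Pᴴ = -P) {g : ℝ → ℝ} (hg : Monotone g) (a : ℝ) {b : ℝ}
    (hb : 0 ≤ b) :
    (trace (cfc g M *
      (a • (M * P - P * M) + b • (P * (P * M - M * P) - (P * M - M * P) * P)))).re ≤ 0 := by
  have hcomm : Commute (cfc g M) M := by
    simpa only [cfc_id' ℝ M] using cfc_commute_cfc g (fun x => x) M
  rw [Matrix.mul_add, trace_add, Complex.add_re, Matrix.mul_smul, Matrix.mul_smul, trace_smul,
    trace_smul, trace_mul_commutator_eq_zero hcomm, smul_zero, Complex.zero_re, zero_add,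
    Complex.smul_re, smul_eq_mul]
  exact mul_nonpos_of_nonneg_of_nonpos hb (hM.re_trace_cfc_mul_double_commutator_nonpos hP hg)

end Matrix

theorem casimir_nonincreasing_hyperviscous_euler_zeitlin_general
    {N : ℕ} (hbar ν : ℝ) (hν : 0 ≤ ν)
    (W P : ℝ → Matrix (Fin N) (Fin N) ℂ)
    (hWskew : ∀ t : ℝ, (W t)ᴴ = -W t) (hPskew : ∀ t : ℝ, (P t)ᴴ = -P t)
    (hW : ∀ (t : ℝ) (i j : Fin N),
      HasDerivAt (fun s => W s i j)
        ((-(1 / hbar) • (W t * P t - P t * W t)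
          + (ν / hbar ^ 2) • (P t * (P t * W t - W t * P t)
            - (P t * W t - W t * P t) * P t)) i j) t)
    (f : ℝ → ℝ) (hf_convex : ConvexOn ℝ Set.univ f) (hf_smooth : ContDiff ℝ 1 f) :
    (∀ t : ℝ, (Matrix.trace (cfc f (Complex.I • W t))).im = 0) ∧
    Antitone (fun t : ℝ => (Matrix.trace (cfc f (Complex.I • W t))).re) := by
  set A := fun t => Complex.I • W t
  have hH : ∀ t, (A t).IsHermitian := fun t => isHermitian_I_smul (hWskew t)
  refine ⟨fun t => (isHermitian_iff_isSelfAdjoint.2 (cfc_predicate f (A t))).im_trace, ?_⟩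
  have hA : ∀ t i j, HasDerivAt (fun s => A s i j)
      ((-(1 / hbar) • (A t * P t - P t * A t) + (ν / hbar ^ 2) •
        (P t * (P t * A t - A t * P t) - (P t * A t - A t * P t) * P t)) i j) t := by
    intro t i j
    refine ((hW t i j).const_mul Complex.I).congr_deriv ?_
    rw [← smul_eq_mul, ← Matrix.smul_apply]
    simp only [A, smul_add, smul_sub, Matrix.mul_sub, Matrix.sub_mul, Matrix.mul_smul,
      Matrix.smul_mul, smul_comm Complex.I]
  have hcont : Continuous A := continuous_pi fun i => continuous_pi fun j =>
    continuous_iff_continuousAt.2 fun t => (hA t i j).continuousAt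
  refine antitone_of_hasDerivAt_nonpos
    (fun t => hasDerivAt_re_trace_cfc hH hcont (hA t) hf_convex hf_smooth) fun t => ?_
  exact (hH t).re_trace_cfc_mul_hyperviscous_nonpos (hPskew t)
    (monotoneOn_univ.1 (hf_convex.monotoneOn_deriv fun x _ =>
      hf_smooth.differentiable one_ne_zero x)) _
    (div_nonneg hν (sq_nonneg hbar))

/-- along the hyperviscous Euler–Zeitlin flow
`dW/dt = -(1/ħ)[W,P] + (ν/ħ²)[P,[P,W]]` with `W(t), P(t)` skew-Hermitian (derivative stated
entrywise via `HasDerivAt`), for every convex, continuously differentiable `f : ℝ → ℝ` the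
Casimir `t ↦ tr(f(i·W(t)))` is a real number and is non-increasing in `t`.  Here `f` is
applied to the Hermitian matrix `i·W(t)` via the continuous functional calculus. -/
theorem casimir_nonincreasing_hyperviscous_euler_zeitlin
    {N : ℕ} (hN : 1 ≤ N) (hbar ν : ℝ) (hbar_ne : hbar ≠ 0) (hν : 0 ≤ ν)
    (W P : ℝ → Matrix (Fin N) (Fin N) ℂ)
    (hWskew : ∀ t : ℝ, (W t)ᴴ = -W t) (hPskew : ∀ t : ℝ, (P t)ᴴ = -P t)
    (hW : ∀ (t : ℝ) (i j : Fin N),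
      HasDerivAt (fun s => W s i j)
        ((-(1 / hbar) • (W t * P t - P t * W t)
          + (ν / hbar ^ 2) • (P t * (P t * W t - W t * P t)
            - (P t * W t - W t * P t) * P t)) i j) t)
    (f : ℝ → ℝ) (hf_convex : ConvexOn ℝ Set.univ f) (hf_smooth : ContDiff ℝ 1 f) :
    (∀ t : ℝ, (Matrix.trace (cfc f (Complex.I • W t))).im = 0) ∧
    Antitone (fun t : ℝ => (Matrix.trace (cfc f (Complex.I • W t))).re) :=
  casimir_nonincreasing_hyperviscous_euler_zeitlin_general hbar ν hν W P hWskew hPskew hW f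
    hf_convex hf_smooth
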